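/- arXiv:1807.08540 — 10 statements merged into one kernel-verified Lean document; each statement's English description precedes it below -/
import Mathlib

section
/- Let π : X → Y be a pseudo-quotient for the action of G on X. Then for any two points x₁, x₂ ∈ X one has π(x₁) = π(x₂) if and only if the closures in X of the orbits G·x₁ and G·x₂ have nonempty intersection. -/
open Pointwise

/-- A pseudo-quotient for the action of a group `G` on a topological space `X`:
a continuous surjective map `π : X → Y` that is constant on `G`-orbits and such that
for any two disjoint closed `G`-invariant subsets `W₁, W₂ ⊆ X`, the closures of
`π(W₁)` and `π(W₂)` are disjoint. -/
structure IsPseudoQuotient (G : Type*) {X Y : Type*} [Group G] [MulAction G X]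
    [TopologicalSpace X] [TopologicalSpace Y] (π : X → Y) : Prop where
  continuous : Continuous π
  surjective : Function.Surjective π
  invariant : ∀ (g : G) (x : X), π (g • x) = π x
  separates : ∀ W₁ W₂ : Set X, IsClosed W₁ → IsClosed W₂ →
    (∀ g : G, g • W₁ = W₁) → (∀ g : G, g • W₂ = W₂) → Disjoint W₁ W₂ →
    Disjoint (closure (π '' W₁)) (closure (π '' W₂))

theorem smul_closure_orbit {G X : Type*} [Group G] [MulAction G X] [TopologicalSpace X]
    [ContinuousConstSMul G X] (g : G) (x : X) :
    g • closure (MulAction.orbit G x) = closure (MulAction.orbit G x) := by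
  rw [← closure_smul, MulAction.smul_orbit]

namespace IsPseudoQuotient

variable {G X Y : Type*} [Group G] [MulAction G X] [TopologicalSpace X] [TopologicalSpace Y]
  {π : X → Y}

theorem eq_of_mem_closure_orbit [T1Space Y] (hπ : IsPseudoQuotient G π) {x z : X}
    (hz : z ∈ closure (MulAction.orbit G x)) : π z = π x := by
  have hz' : π z ∈ closure {π x} :=
    map_mem_closure hπ.continuous hz fun _ ⟨g, hg⟩ => hg ▸ hπ.invariant g x
  rwa [closure_singleton] at hz'

theorem ne_of_disjoint_closure_orbit [ContinuousConstSMul G X] (hπ : IsPseudoQuotient G π)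
    {x₁ x₂ : X}
    (h : Disjoint (closure (MulAction.orbit G x₁)) (closure (MulAction.orbit G x₂))) :
    π x₁ ≠ π x₂ := by
  have hsep := hπ.separates _ _ isClosed_closure isClosed_closure
    (smul_closure_orbit · x₁) (smul_closure_orbit · x₂) h
  have mem_closure_image (x : X) : π x ∈ closure (π '' closure (MulAction.orbit G x)) :=
    subset_closure (Set.mem_image_of_mem π (subset_closure (MulAction.mem_orbit_self x)))
  exact hsep.ne_of_mem (mem_closure_image x₁) (mem_closure_image x₂)

end IsPseudoQuotient

/-- For a pseudo-quotient `π`, two points have the same image iff the closures of their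
orbits intersect. -/
theorem pseudoQuotient_eq_iff_orbitClosures_inter {G X Y : Type*} [Group G] [MulAction G X]
    [TopologicalSpace X] [TopologicalSpace Y] [T1Space Y] [ContinuousConstSMul G X]
    (π : X → Y) (hπ : IsPseudoQuotient G π) (x₁ x₂ : X) :
    π x₁ = π x₂ ↔
      (closure (MulAction.orbit G x₁) ∩ closure (MulAction.orbit G x₂)).Nonempty := by
  refine ⟨fun h => ?_, fun ⟨z, hz₁, hz₂⟩ => ?_⟩
  · exact Set.not_disjoint_iff_nonempty_inter.mp fun hd => hπ.ne_of_disjoint_closure_orbit hd h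
  · rw [← hπ.eq_of_mem_closure_orbit hz₁, hπ.eq_of_mem_closure_orbit hz₂]
end

section
/- Let π : X → Y be a pseudo-quotient for the action of G on X. Then for every closed G-invariant subset W ⊆ X, the image π(W) is closed in Y. -/
open Pointwise

/-! For `y ∈ closure (π '' W)`, the fibre `π ⁻¹' {y}` is closed (as `Y` is T1) and invariant.
If it missed `W`, the pseudo-quotient property would make `closure (π '' W)` disjoint from
`closure (π '' π ⁻¹' {y}) ∋ y`. -/

theorem smul_preimage_eq_of_forall_smul_eq {G X Y : Type*} [Group G] [MulAction G X]
    {f : X → Y} (hf : ∀ (g : G) (x : X), f (g • x) = f x) (g : G) (s : Set Y) :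
    g • f ⁻¹' s = f ⁻¹' s := by
  ext x
  simp only [Set.mem_smul_set_iff_inv_smul_mem, Set.mem_preimage, hf]

namespace IsPseudoQuotient

variable {G X Y : Type*} [Group G] [MulAction G X] [TopologicalSpace X] [TopologicalSpace Y]
  {π : X → Y}

theorem mem_image_of_mem_closure_image [T1Space Y] (hπ : IsPseudoQuotient G π) {W : Set X}
    (hWc : IsClosed W) (hWinv : ∀ g : G, g • W = W) {y : Y} (hy : y ∈ closure (π '' W)) :
    y ∈ π '' W := by
  by_contra hyW
  have hfibre_disjoint : Disjoint W (π ⁻¹' {y}) :=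
    Set.disjoint_left.mpr fun x hxW hxy => hyW ⟨x, hxW, hxy⟩
  have hsep := hπ.separates W (π ⁻¹' {y}) hWc (isClosed_singleton.preimage hπ.continuous)
    hWinv (smul_preimage_eq_of_forall_smul_eq hπ.invariant · _) hfibre_disjoint
  obtain ⟨x, rfl⟩ := hπ.surjective y
  exact Set.disjoint_left.mp hsep hy (subset_closure ⟨x, rfl, rfl⟩)

end IsPseudoQuotient

theorem pseudoQuotient_isClosed_image_general {G X Y : Type*} [Group G] [MulAction G X]
    [TopologicalSpace X] [TopologicalSpace Y] [T1Space Y]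
    (π : X → Y) (hπ : IsPseudoQuotient G π)
    (W : Set X) (hWc : IsClosed W) (hWinv : ∀ g : G, g • W = W) :
    IsClosed (π '' W) :=
  closure_subset_iff_isClosed.mp fun _ hy => hπ.mem_image_of_mem_closure_image hWc hWinv hy

/-- For a pseudo-quotient `π`, the image of any closed `G`-invariant subset is closed. -/
theorem pseudoQuotient_isClosed_image {G X Y : Type*} [Group G] [MulAction G X]
    [TopologicalSpace X] [TopologicalSpace Y] [T1Space Y] [ContinuousConstSMul G X]
    (π : X → Y) (hπ : IsPseudoQuotient G π)
    (W : Set X) (hWc : IsClosed W) (hWinv : ∀ g : G, g • W = W) :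
    IsClosed (π '' W) :=
  pseudoQuotient_isClosed_image_general π hπ W hWc hWinv
end

section
/- Let π : X → Y be a pseudo-quotient for the action of G on X and let W ⊆ X be a closed G-invariant subset. Then the restriction π|_W : W → π(W), where W and π(W) carry the subspace topologies and G acts on W by restriction, is a pseudo-quotient for the action of G on W. -/
open Pointwise

/-- A `G`-invariant subset of `X`, viewed as a `SubMulAction`, so that the restricted
`G`-action on the subtype is available. -/
def invariantSubMulAction {G X : Type*} [Group G] [MulAction G X]
    (W : Set X) (hWinv : ∀ g : G, g • W = W) : SubMulAction G X :=
  ⟨W, fun g {x} hx => by rw [← hWinv g]; exact Set.smul_mem_smul_set hx⟩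

/-!
Since `W` is closed and invariant, closed invariant subsets of `W` are closed invariant subsets
of `X`, so `π` separates their images in `Y`; the inclusion `π(W) → Y` is continuous, so
closures taken in `π(W)` lie in the traces of closures taken in `Y` and stay disjoint.
-/

theorem SubMulAction.smul_image_val_of_smul_eq {G X : Type*} [Group G] [MulAction G X]
    {p : SubMulAction G X} {V : Set p} (hV : ∀ g : G, g • V = V) (g : G) :
    g • ((↑) '' V : Set X) = (↑) '' V := by
  conv_rhs => rw [← hV g]
  exact (image_smul_set p.subtype g V).symm

theorem Disjoint.closure_of_closure_image {A B : Type*} [TopologicalSpace A] [TopologicalSpace B]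
    {f : A → B} (hf : Continuous f) {s t : Set A}
    (h : Disjoint (closure (f '' s)) (closure (f '' t))) : Disjoint (closure s) (closure t) :=
  (h.preimage f).mono (closure_subset_preimage_closure_image hf)
    (closure_subset_preimage_closure_image hf)

theorem pseudoQuotient_restrict_closed_general {G X Y : Type*} [Group G] [MulAction G X]
    [TopologicalSpace X] [TopologicalSpace Y] (π : X → Y) (hπ : IsPseudoQuotient G π)
    (W : Set X) (hWc : IsClosed W) (hWinv : ∀ g : G, g • W = W) :
    IsPseudoQuotient G
      (fun w : invariantSubMulAction W hWinv =>
        (⟨π w, Set.mem_image_of_mem π w.2⟩ : π '' W)) := by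
  refine ⟨(hπ.continuous.comp continuous_subtype_val).subtype_mk _, ?_,
    fun g x => Subtype.ext (hπ.invariant g x), ?_⟩
  · rintro ⟨_, x, hx, rfl⟩
    exact ⟨⟨x, hx⟩, rfl⟩
  · intro V₁ V₂ hV₁ hV₂ hV₁inv hV₂inv hV
    -- restated over the carrier of the `SubMulAction`, so that the images below have the right type
    have hWc : IsClosed (invariantSubMulAction W hWinv : Set X) := hWc
    have hsep := hπ.separates _ _ (hWc.isClosedMap_subtype_val _ hV₁)
      (hWc.isClosedMap_subtype_val _ hV₂) (SubMulAction.smul_image_val_of_smul_eq hV₁inv)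
      (SubMulAction.smul_image_val_of_smul_eq hV₂inv)
      ((Set.disjoint_image_iff Subtype.val_injective).mpr hV)
    apply Disjoint.closure_of_closure_image continuous_subtype_val
    rw [Set.image_image, Set.image_image] at hsep ⊢
    exact hsep

/-- The restriction of a pseudo-quotient to a closed `G`-invariant subset `W`,
as a map `W → π(W)` (with subspace topologies and restricted `G`-action),
is again a pseudo-quotient. -/
theorem pseudoQuotient_restrict_closed {G X Y : Type*} [Group G] [MulAction G X]
    [TopologicalSpace X] [TopologicalSpace Y] [T1Space Y] [ContinuousConstSMul G X]
    (π : X → Y) (hπ : IsPseudoQuotient G π)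
    (W : Set X) (hWc : IsClosed W) (hWinv : ∀ g : G, g • W = W) :
    IsPseudoQuotient G
      (fun w : invariantSubMulAction W hWinv =>
        (⟨π w, Set.mem_image_of_mem π w.2⟩ : π '' W)) :=
  pseudoQuotient_restrict_closed_general π hπ W hWc hWinv
end

section
/- Let π : X → Y be a pseudo-quotient for the action of G on X and let V ⊆ Y be an open subset. Then the restriction π : π⁻¹(V) → V, where π⁻¹(V) and V carry the subspace topologies and G acts on π⁻¹(V) by restriction, is a pseudo-quotient for the action of G on π⁻¹(V). -/
/-!
A pseudo-quotient maps closed invariant sets onto closed sets: if `π x` lay in the closure of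
`π '' C` but not in `π '' C`, the fibre `π ⁻¹' {π x}` and `C` would be disjoint closed invariant
sets whose images have meeting closures. Cutting two closed invariant sets `C₁, C₂` down to a
common fibre then shows that the closures of `π '' C₁` and `π '' C₂` meet only in `π '' (C₁ ∩ C₂)`.

Over `V`, take for `Cᵢ` the closures in `X` of two disjoint closed invariant subsets `Wᵢ` of
`π ⁻¹' V`. Since `Wᵢ` is closed in `π ⁻¹' V`, `Cᵢ ∩ π ⁻¹' V = Wᵢ`, so `C₁ ∩ C₂` has no point
over `V`, and the closures of the images of `W₁` and `W₂` cannot meet in `V`.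
-/

open Pointwise

open Set

namespace IsPseudoQuotient

variable {G X Y : Type*} [Group G] [MulAction G X] [TopologicalSpace X] [TopologicalSpace Y]
  {π : X → Y}

theorem smul_preimage (hπ : IsPseudoQuotient G π) (g : G) (s : Set Y) :
    g • π ⁻¹' s = π ⁻¹' s := by
  ext x
  rw [mem_smul_set_iff_inv_smul_mem, mem_preimage, mem_preimage, hπ.invariant]

variable [T1Space Y]

theorem isClosed_image (hπ : IsPseudoQuotient G π) {C : Set X} (hC : IsClosed C)
    (hCinv : ∀ g : G, g • C = C) : IsClosed (π '' C) := by
  refine closure_subset_iff_isClosed.mp fun y hy => ?_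
  by_contra hyC
  obtain ⟨x, rfl⟩ := hπ.surjective y
  have hdisj : Disjoint (π ⁻¹' {π x}) C :=
    disjoint_left.mpr fun z hz hzC => hyC ⟨z, hzC, hz⟩
  exact (hπ.separates _ _ (isClosed_singleton.preimage hπ.continuous) hC (hπ.smul_preimage · _)
    hCinv hdisj).ne_of_mem (subset_closure ⟨x, rfl, rfl⟩) hy rfl

theorem image_inter_image_subset (hπ : IsPseudoQuotient G π) {C₁ C₂ : Set X}
    (hC₁ : IsClosed C₁) (hC₂ : IsClosed C₂) (hC₁inv : ∀ g : G, g • C₁ = C₁)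
    (hC₂inv : ∀ g : G, g • C₂ = C₂) : π '' C₁ ∩ π '' C₂ ⊆ π '' (C₁ ∩ C₂) := by
  rintro _ ⟨⟨x₁, hx₁, rfl⟩, x₂, hx₂, hx₁₂⟩
  by_contra hx
  have hF : IsClosed (π ⁻¹' {π x₁}) := isClosed_singleton.preimage hπ.continuous
  have hdisj : Disjoint (π ⁻¹' {π x₁} ∩ C₁) (π ⁻¹' {π x₁} ∩ C₂) :=
    disjoint_left.mpr fun z ⟨hz, hz₁⟩ ⟨_, hz₂⟩ => hx ⟨z, ⟨hz₁, hz₂⟩, hz⟩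
  refine (hπ.separates _ _ (hF.inter hC₁) (hF.inter hC₂) (fun g => ?_) (fun g => ?_)
    hdisj).ne_of_mem (subset_closure ⟨x₁, ⟨rfl, hx₁⟩, rfl⟩)
    (subset_closure ⟨x₂, ⟨hx₁₂, hx₂⟩, hx₁₂⟩) rfl
  · rw [smul_set_inter, hπ.smul_preimage, hC₁inv]
  · rw [smul_set_inter, hπ.smul_preimage, hC₂inv]

theorem closure_image_inter_closure_image_subset (hπ : IsPseudoQuotient G π) {C₁ C₂ : Set X}
    (hC₁ : IsClosed C₁) (hC₂ : IsClosed C₂) (hC₁inv : ∀ g : G, g • C₁ = C₁)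
    (hC₂inv : ∀ g : G, g • C₂ = C₂) :
    closure (π '' C₁) ∩ closure (π '' C₂) ⊆ π '' (C₁ ∩ C₂) := by
  rw [(hπ.isClosed_image hC₁ hC₁inv).closure_eq, (hπ.isClosed_image hC₂ hC₂inv).closure_eq]
  exact hπ.image_inter_image_subset hC₁ hC₂ hC₁inv hC₂inv

end IsPseudoQuotient

theorem SubMulAction.smul_closure_image_val {G X : Type*} [Group G] [MulAction G X]
    [TopologicalSpace X] [ContinuousConstSMul G X] {S : SubMulAction G X} {W : Set S}
    (hW : ∀ g : G, g • W = W) (g : G) :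
    g • _root_.closure (((↑) : S → X) '' W) = _root_.closure (((↑) : S → X) '' W) := by
  rw [← closure_smul, ← S.subtype_eq_val, ← image_smul_set, hW]

theorem IsPseudoQuotient.restrict {G X Y : Type*} [Group G] [MulAction G X]
    [TopologicalSpace X] [TopologicalSpace Y] [T1Space Y] [ContinuousConstSMul G X]
    {π : X → Y} (hπ : IsPseudoQuotient G π) {V : Set Y} (S : SubMulAction G X)
    (hS : ∀ x, x ∈ S ↔ π x ∈ V) :
    IsPseudoQuotient G (fun x : S => (⟨π x, (hS x).1 x.2⟩ : V)) where
  continuous := (hπ.continuous.comp continuous_subtype_val).subtype_mk _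
  surjective := by
    rintro ⟨y, hy⟩
    obtain ⟨x, rfl⟩ := hπ.surjective y
    exact ⟨⟨x, (hS x).2 hy⟩, rfl⟩
  invariant g x := Subtype.ext (hπ.invariant g x)
  separates W₁ W₂ hW₁ hW₂ hW₁inv hW₂inv hW := by
    refine disjoint_left.mpr fun y hy₁ hy₂ => ?_
    rw [closure_subtype, image_image] at hy₁ hy₂
    have mem_closure_image {W : Set S} (hy : (y : Y) ∈ closure ((fun x : S => π x) '' W)) :
        (y : Y) ∈ closure (π '' closure ((↑) '' W)) :=
      closure_mono (image_mono subset_closure) (by rwa [image_image])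
    obtain ⟨x, ⟨hx₁, hx₂⟩, hxy⟩ := hπ.closure_image_inter_closure_image_subset isClosed_closure
      isClosed_closure (S.smul_closure_image_val hW₁inv) (S.smul_closure_image_val hW₂inv)
      ⟨mem_closure_image hy₁, mem_closure_image hy₂⟩
    have hxS : x ∈ S := (hS x).2 (hxy ▸ y.2)
    have hx₁ : (⟨x, hxS⟩ : S) ∈ W₁ := hW₁.closure_subset (closure_subtype.mpr hx₁)
    have hx₂ : (⟨x, hxS⟩ : S) ∈ W₂ := hW₂.closure_subset (closure_subtype.mpr hx₂)
    exact disjoint_left.mp hW hx₁ hx₂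

/-- The restriction of a pseudo-quotient over an open subset `V` of the base, as a map
`π⁻¹(V) → V` (with subspace topologies and restricted `G`-action), is again a
pseudo-quotient. -/
theorem pseudoQuotient_restrict_open_base {G X Y : Type*} [Group G] [MulAction G X]
    [TopologicalSpace X] [TopologicalSpace Y] [T1Space Y] [ContinuousConstSMul G X]
    (π : X → Y) (hπ : IsPseudoQuotient G π)
    (V : Set Y) :
    IsPseudoQuotient G
      (fun x : (⟨π ⁻¹' V, fun g {x} hx => by
          show π (g • x) ∈ V
          rw [hπ.invariant g x]; exact hx⟩ : SubMulAction G X) =>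
        (⟨π x, x.2⟩ : V)) :=
  hπ.restrict _ fun _ => Iff.rfl
end

section
/- Let π : X → X̄ be a pseudo-quotient for the action of G on X. Let Y ⊆ X be a subset and H ⊆ G a subgroup with h·Y = Y for all h ∈ H, satisfying: (i) for every a ∈ Y, the closure in X of the H-orbit H·a is contained in Y; (ii) for every x ∈ X, the closure in X of the orbit G·x intersects Y; (iii) for any two H-invariant subsets W₁, W₂ ⊆ Y that are closed in the subspace topology of Y, one has W₁ ∩ W₂ = ∅ if and only if the closures in X of G·W₁ and G·W₂ are disjoint. Then the restriction π|_Y : Y → X̄ is a pseudo-quotient for the action of H on Y; in particular, π|_Y is surjective onto X̄. -/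
open Pointwise

/-!
Closures of `G`-saturated sets are closed and `G`-invariant, so the separation property of `π`
applies to the closed saturations of two disjoint closed `H`-invariant subsets of `Y`, which are
disjoint by (iii). Surjectivity comes from (ii): `π` is constant on each orbit closure, since
the fibres of `π` are closed.
-/

section Saturation

variable {G X : Type*} [Group G] [MulAction G X]

theorem smul_iUnion_smul (g : G) (W : Set X) : g • ⋃ g' : G, g' • W = ⋃ g' : G, g' • W := by
  simp_rw [Set.smul_set_iUnion, smul_smul]
  exact (mul_left_surjective g).iUnion_comp (· • W)

variable [TopologicalSpace X]

theorem subset_closure_iUnion_smul (W : Set X) : W ⊆ closure (⋃ g : G, g • W) :=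
  fun x hx => subset_closure (Set.mem_iUnion.2 ⟨1, by rwa [one_smul]⟩)

theorem smul_closure_iUnion_smul [ContinuousConstSMul G X] (g : G) (W : Set X) :
    g • closure (⋃ g' : G, g' • W) = closure (⋃ g' : G, g' • W) := by
  rw [← closure_smul, smul_iUnion_smul]

end Saturation

theorem eq_of_mem_closure_of_forall_eq {X Y : Type*} [TopologicalSpace X] [TopologicalSpace Y]
    [T1Space Y] {f : X → Y} (hf : Continuous f) {S : Set X} {c : Y} (hS : ∀ x ∈ S, f x = c)
    {x : X} (hx : x ∈ closure S) : f x = c := by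
  have hfS : f '' S ⊆ {c} := by rintro _ ⟨s, hs, rfl⟩; exact hS s hs
  simpa [closure_singleton] using
    closure_mono hfS (image_closure_subset_closure_image hf ⟨x, hx, rfl⟩)

theorem SubMulAction.image_val_smul {H X : Type*} [Monoid H] [MulAction H X]
    (p : SubMulAction H X) (h : H) (W : Set p) :
    Subtype.val '' (h • W) = h • Subtype.val '' W :=
  image_smul_set p.subtype h W

namespace IsPseudoQuotient

variable {G X Y : Type*} [Group G] [MulAction G X] [TopologicalSpace X] [TopologicalSpace Y]
  {π : X → Y}

theorem apply_eq_of_mem_closure_orbit [T1Space Y] (hπ : IsPseudoQuotient G π) {x y : X}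
    (hy : y ∈ closure (MulAction.orbit G x)) : π y = π x :=
  eq_of_mem_closure_of_forall_eq hπ.continuous
    (by rintro _ ⟨g, rfl⟩; exact hπ.invariant g x) hy

theorem disjoint_closure_image_of_disjoint_closure_iUnion_smul [ContinuousConstSMul G X]
    (hπ : IsPseudoQuotient G π) {W₁ W₂ : Set X}
    (hW : Disjoint (closure (⋃ g : G, g • W₁)) (closure (⋃ g : G, g • W₂))) :
    Disjoint (closure (π '' W₁)) (closure (π '' W₂)) :=
  (hπ.separates _ _ isClosed_closure isClosed_closure (smul_closure_iUnion_smul · W₁)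
    (smul_closure_iUnion_smul · W₂) hW).mono
    (closure_mono (Set.image_mono (subset_closure_iUnion_smul W₁)))
    (closure_mono (Set.image_mono (subset_closure_iUnion_smul W₂)))

end IsPseudoQuotient

theorem pseudoQuotient_core {G X Xb : Type*} [Group G] [MulAction G X]
    [TopologicalSpace X] [TopologicalSpace Xb] [T1Space Xb] [ContinuousConstSMul G X]
    (π : X → Xb) (hπ : IsPseudoQuotient G π)
    (Y : Set X) (H : Subgroup G) (hY : ∀ h : H, h • Y = Y)
    (h2 : ∀ x : X, (closure (MulAction.orbit G x) ∩ Y).Nonempty)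
    (h3 : ∀ W₁ W₂ : Set X, W₁ ⊆ Y → W₂ ⊆ Y →
      IsClosed (Subtype.val ⁻¹' W₁ : Set Y) → IsClosed (Subtype.val ⁻¹' W₂ : Set Y) →
      (∀ h : H, h • W₁ = W₁) → (∀ h : H, h • W₂ = W₂) →
      (W₁ ∩ W₂ = ∅ ↔ Disjoint (closure (⋃ g : G, g • W₁)) (closure (⋃ g : G, g • W₂)))) :
    IsPseudoQuotient H
      (fun y : (⟨Y, fun h {x} hx => by
          rw [← hY h]; exact Set.smul_mem_smul_set hx⟩ : SubMulAction H X) =>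
        π y) := by
  refine ⟨hπ.continuous.comp continuous_subtype_val, fun xb => ?_,
    fun h y => hπ.invariant (h : G) y, fun W₁ W₂ hW₁ hW₂ hi₁ hi₂ hW => ?_⟩
  · obtain ⟨x, rfl⟩ := hπ.surjective xb
    obtain ⟨y, hy, hyY⟩ := h2 x
    exact ⟨⟨y, hyY⟩, hπ.apply_eq_of_mem_closure_orbit hy⟩
  · simp only [← Set.image_image π Subtype.val]
    refine hπ.disjoint_closure_image_of_disjoint_closure_iUnion_smul
      ((h3 _ _ (Subtype.coe_image_subset _ _) (Subtype.coe_image_subset _ _) ?_ ?_ ?_ ?_).1 ?_)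
    · rwa [Subtype.val_injective.preimage_image]
    · rwa [Subtype.val_injective.preimage_image]
    · exact fun h => (SubMulAction.image_val_smul _ h _).symm.trans (by rw [hi₁])
    · exact fun h => (SubMulAction.image_val_smul _ h _).symm.trans (by rw [hi₂])
    · exact Set.disjoint_iff_inter_eq_empty.1 ((Set.disjoint_image_iff Subtype.val_injective).2 hW)
end

section
/- Let f₁, …, f_r be polynomials in n variables over ℂ, and let W ⊆ SL₂(ℂ)ⁿ be the set of tuples (D_{λ₁}, …, D_{λₙ}) of diagonal matrices with λ₁, …, λₙ ∈ ℂ* and fⱼ(λ₁, …, λₙ) = 0 for all j. If a tuple A ∈ SL₂(ℂ)ⁿ lies in the closure, in the analytic topology, of the set {(PB₁P⁻¹, …, PBₙP⁻¹) : P ∈ SL₂(ℂ), (B₁, …, Bₙ) ∈ W}, then the closure in the analytic topology of the conjugation orbit of A intersects W. -/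
/-- The diagonal matrix `D_λ ∈ SL₂(ℂ)` with diagonal entries `λ, λ⁻¹`. -/
noncomputable def diagSL (l : ℂˣ) : Matrix.SpecialLinearGroup (Fin 2) ℂ :=
  ⟨!![(l : ℂ), 0; 0, ((l⁻¹ : ℂˣ) : ℂ)], by
    simp [Matrix.det_fin_two_of, ← Units.val_mul]⟩

/-- The upper triangular matrix in `SL₂(ℂ)` with diagonal entries `λ, λ⁻¹` and upper
right entry `α`. -/
noncomputable def triSL (l : ℂˣ) (a : ℂ) : Matrix.SpecialLinearGroup (Fin 2) ℂ :=
  ⟨!![(l : ℂ), a; 0, ((l⁻¹ : ℂˣ) : ℂ)], by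
    simp [Matrix.det_fin_two_of, ← Units.val_mul]⟩

/-!
Commutation is a closed condition, so the tuple `A` commutes pairwise and is simultaneously
conjugate to an upper triangular tuple with diagonals `(λᵢ, λᵢ⁻¹)`. Conjugating by `D_t` scales
the upper right entries by `t²`, so letting `t → 0` puts `D_λ` in the orbit closure of `A`, and
conjugating by the Weyl element puts `D_{λ⁻¹}` there too.

The traces `tr Aᵢ` and `tr (Aᵢ Aⱼ)` are continuous conjugation invariants. Along a sequence of
conjugates of tuples `D_{μₖ}` from `W` converging to `A` they give `μₖᵢ + μₖᵢ⁻¹ → λᵢ + λᵢ⁻¹`,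
which keeps the `μₖ` and `μₖ⁻¹` bounded, so the `μₖ` have a limit point `ν`, which still satisfies
the equations of `W`. The single traces give `νᵢ ∈ {λᵢ, λᵢ⁻¹}` and the pairwise ones make
the choice of sign uniform: `ν = λ` or `ν = λ⁻¹`, so `D_ν` lies in both the orbit closure and `W`.
-/

open Matrix Filter Topology MatrixGroups

local notation "M₂" => Matrix (Fin 2) (Fin 2) ℂ

-- `Matrix` is a type synonym, so the instance for iterated function types is not found.
instance {m n R : Type*} [Countable m] [Countable n] [TopologicalSpace R]
    [FirstCountableTopology R] : FirstCountableTopology (Matrix m n R) :=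
  inferInstanceAs (FirstCountableTopology (m → n → R))

theorem eq_or_eq_inv_of_forall_mul {G ι : Type*} [CommGroup G] {x y : ι → G}
    (h₁ : ∀ i, x i = y i ∨ x i = (y i)⁻¹)
    (h₂ : ∀ i j, x i * x j = y i * y j ∨ x i * x j = (y i * y j)⁻¹) :
    x = y ∨ x = y⁻¹ := by
  by_contra! h
  obtain ⟨i, hi⟩ := Function.ne_iff.1 h.1
  obtain ⟨j, hj⟩ := Function.ne_iff.1 h.2
  have hxi : x i = (y i)⁻¹ := (h₁ i).resolve_left hi
  have hxj : x j = y j := (h₁ j).resolve_right hj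
  rcases h₂ i j with h | h
  · rw [hxi, hxj, mul_left_inj] at h
    exact hi (hxi.trans h)
  · rw [hxi, hxj, mul_inv, mul_right_inj] at h
    exact hj (hxj.trans h)

theorem Units.add_inv_eq_add_inv_iff {K : Type*} [Field K] {u v : Kˣ} :
    (u : K) + (u : K)⁻¹ = v + (v : K)⁻¹ ↔ u = v ∨ u = v⁻¹ := by
  have hu := u.ne_zero
  have hv := v.ne_zero
  constructor
  · intro h
    have key : ((u : K) - v) * (u * v - 1) = 0 := by
      field_simp at h
      linear_combination h
    rcases mul_eq_zero.1 key with h' | h'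
    · exact Or.inl (Units.ext (sub_eq_zero.1 h'))
    · exact Or.inr (Units.ext (Units.eq_inv_of_mul_eq_one_left (by linear_combination h')))
  · rintro (rfl | rfl)
    · rfl
    · simp [add_comm]

theorem norm_le_norm_add_inv_add_one {𝕜 : Type*} [NormedDivisionRing 𝕜] (x : 𝕜) :
    ‖x‖ ≤ ‖x + x⁻¹‖ + 1 := by
  rcases le_or_gt ‖x‖ 1 with hx | hx
  · linarith [norm_nonneg (x + x⁻¹)]
  · have hinv : ‖x⁻¹‖ ≤ 1 := by
      rw [norm_inv]; exact inv_le_one_of_one_le₀ hx.le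
    calc ‖x‖ = ‖(x + x⁻¹) - x⁻¹‖ := by rw [add_sub_cancel_right]
      _ ≤ ‖x + x⁻¹‖ + ‖x⁻¹‖ := norm_sub_le _ _
      _ ≤ ‖x + x⁻¹‖ + 1 := by linarith

theorem IsCompact.exists_eq_of_tendsto_comp {X Y α : Type*} [TopologicalSpace X]
    [TopologicalSpace Y] [T2Space Y] {K : Set X} (hK : IsCompact K) {l : Filter α} [l.NeBot]
    {z : α → X} (hz : ∀ a, z a ∈ K) {F : X → Y} (hF : Continuous F) {y : Y}
    (h : Tendsto (F ∘ z) l (𝓝 y)) : ∃ x ∈ K, F x = y := by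
  obtain ⟨x, hxK, hx⟩ := hK.exists_mapClusterPt (f := l) (u := z)
    (tendsto_principal.2 (Eventually.of_forall hz))
  exact ⟨x, hxK, eq_of_nhds_neBot (ClusterPt.mono (hx.tendsto_comp (hF.tendsto x)) h)⟩

theorem isClosed_setOf_forall_commute {ι M : Type*} [TopologicalSpace M] [Mul M]
    [ContinuousMul M] [T2Space M] : IsClosed {B : ι → M | ∀ i j, Commute (B i) (B j)} := by
  simp only [Set.ofPred_forall]
  exact isClosed_iInter fun i => isClosed_iInter fun j => isClosed_eq (by fun_prop) (by fun_prop)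

theorem MvPolynomial.isClosed_setOf_forall_eval_eq_zero {σ ι R : Type*} [CommSemiring R]
    [TopologicalSpace R] [IsTopologicalSemiring R] [T2Space R] (f : ι → MvPolynomial σ R) :
    IsClosed {x : σ → R | ∀ j, eval x (f j) = 0} := by
  simp only [Set.ofPred_forall]
  exact isClosed_iInter fun j => isClosed_eq (continuous_eval _) continuous_const

theorem exists_common_eigenvector {K ι : Type*} [Field K] [IsAlgClosed K]
    {A : ι → Matrix (Fin 2) (Fin 2) K} (hA : ∀ i j, Commute (A i) (A j)) :
    ∃ v : Fin 2 → K, v ≠ 0 ∧ ∀ i, ∃ c : K, A i *ᵥ v = c • v := by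
  by_cases hscalar : ∀ i, ∃ c : K, A i = c • (1 : Matrix (Fin 2) (Fin 2) K)
  · refine ⟨Pi.single 0 1, by simp, fun i => ?_⟩
    obtain ⟨c, hc⟩ := hscalar i
    exact ⟨c, by rw [hc, smul_mulVec, one_mulVec]⟩
  push Not at hscalar
  obtain ⟨i₀, hi₀⟩ := hscalar
  obtain ⟨c, hc⟩ := Module.End.exists_eigenvalue (toLin' (A i₀))
  obtain ⟨v, hvE, hv0⟩ := hc.exists_hasEigenvector
  set E := Module.End.eigenspace (toLin' (A i₀)) c
  have hE_ne_top : E ≠ ⊤ := by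
    intro hE
    refine hi₀ c (toLin'.injective (LinearMap.ext fun x => ?_))
    have hx := Module.End.mem_eigenspace_iff.1 (hE ▸ Submodule.mem_top : x ∈ E)
    simpa [smul_eq_mul] using hx
  have hE_rank : Module.finrank K E = 1 := by
    have hpos : Module.finrank K E ≠ 0 := by
      rw [Ne, Submodule.finrank_eq_zero]
      exact fun h => hv0 ((Submodule.mem_bot K).1 (h ▸ hvE))
    have hlt := Submodule.finrank_lt hE_ne_top
    rw [Module.finrank_fin_fun] at hlt
    omega
  refine ⟨v, hv0, fun j => ?_⟩
  have hmem : A j *ᵥ v ∈ E := by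
    have hcomm : Commute (toLin' (A i₀)) (toLin' (A j)) := by
      simp only [Commute, SemiconjBy, Module.End.mul_eq_comp, ← toLin'_mul, (hA i₀ j).eq]
    exact Module.End.mapsTo_genEigenspace_of_comm hcomm c 1 hvE
  obtain ⟨d, hd⟩ := (finrank_eq_one_iff_of_nonzero' (⟨v, hvE⟩ : E)
    (by simpa using hv0)).1 hE_rank ⟨_, hmem⟩
  exact ⟨d, (congrArg Subtype.val hd).symm⟩

theorem exists_specialLinearGroup_col_eq {K : Type*} [Field K] {v : Fin 2 → K} (hv : v ≠ 0) :
    ∃ R : SL(2, K), (R : Matrix (Fin 2) (Fin 2) K).col 0 = v := by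
  by_cases h0 : v 0 = 0
  · have h1 : v 1 ≠ 0 := fun h1 => hv (funext fun i => by fin_cases i <;> simp [h0, h1])
    refine ⟨⟨!![0, -(v 1)⁻¹; v 1, 0], by simp [det_fin_two_of, h1]⟩, ?_⟩
    funext i; fin_cases i <;> simp [h0]
  · refine ⟨⟨!![v 0, 0; v 1, (v 0)⁻¹], by simp [det_fin_two_of, h0]⟩, ?_⟩
    funext i; fin_cases i <;> simp

theorem coe_triSL (l : ℂˣ) (a : ℂ) : (triSL l a : M₂) = !![(l : ℂ), a; 0, (l : ℂ)⁻¹] := by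
  simp [triSL]

theorem coe_diagSL (l : ℂˣ) : (diagSL l : M₂) = !![(l : ℂ), 0; 0, (l : ℂ)⁻¹] := by
  simp [diagSL]

theorem triSL_zero (l : ℂˣ) : triSL l 0 = diagSL l := by
  ext i j; fin_cases i <;> fin_cases j <;> rfl

theorem diagSL_one : diagSL 1 = 1 := by
  ext i j; fin_cases i <;> fin_cases j <;> simp [coe_diagSL]

theorem diagSL_mul (l m : ℂˣ) : diagSL l * diagSL m = diagSL (l * m) := by
  ext i j
  fin_cases i <;> fin_cases j <;> simp [Matrix.SpecialLinearGroup.coe_mul, coe_diagSL, mul_comm]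

theorem diagSL_commute (l m : ℂˣ) : Commute (diagSL l) (diagSL m) := by
  rw [Commute, SemiconjBy, diagSL_mul, diagSL_mul, mul_comm]

theorem diagSL_inv (l : ℂˣ) : (diagSL l)⁻¹ = diagSL l⁻¹ :=
  inv_eq_of_mul_eq_one_right (by rw [diagSL_mul, mul_inv_cancel, diagSL_one])

theorem diagSL_conj_triSL (t l : ℂˣ) (a : ℂ) :
    diagSL t * triSL l a * (diagSL t)⁻¹ = triSL l ((t : ℂ) ^ 2 * a) := by
  rw [diagSL_inv]
  ext i j
  fin_cases i <;> fin_cases j <;>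
    simp [Matrix.SpecialLinearGroup.coe_mul, coe_diagSL, coe_triSL]
  all_goals field_simp

noncomputable def weylSL : SL(2, ℂ) :=
  ⟨!![0, 1; -1, 0], by simp [det_fin_two_of]⟩

theorem coe_weylSL : (weylSL : M₂) = !![0, 1; -1, 0] := rfl

theorem weylSL_conj_diagSL (l : ℂˣ) : weylSL * diagSL l * weylSL⁻¹ = diagSL l⁻¹ := by
  have hinv : ((weylSL⁻¹ : SL(2, ℂ)) : M₂) = !![0, -1; 1, 0] := by
    rw [Matrix.SpecialLinearGroup.coe_inv, coe_weylSL, adjugate_fin_two_of]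
    simp
  ext i j
  fin_cases i <;> fin_cases j <;>
    simp [Matrix.SpecialLinearGroup.coe_mul, hinv, coe_diagSL, coe_weylSL]

theorem exists_eq_triSL_of_apply_one_zero {X : SL(2, ℂ)} (hX : (X : M₂) 1 0 = 0) :
    ∃ l a, X = triSL l a := by
  have hdet : (X : M₂) 0 0 * (X : M₂) 1 1 = 1 := by
    have := X.det_coe
    rwa [det_fin_two, hX, mul_zero, sub_zero] at this
  refine ⟨Units.mkOfMulEqOne _ _ hdet, (X : M₂) 0 1, Subtype.ext ?_⟩
  rw [coe_triSL, ← Units.val_inv_eq_inv_val]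
  ext i j
  fin_cases i <;> fin_cases j <;> simp [hX, eq_inv_of_mul_eq_one_right hdet]

theorem exists_conj_eq_triSL {ι : Type*} {A : ι → SL(2, ℂ)}
    (hA : ∀ i j, Commute (A i : M₂) (A j)) :
    ∃ (Q : SL(2, ℂ)) (l : ι → ℂˣ) (a : ι → ℂ), ∀ i, Q * A i * Q⁻¹ = triSL (l i) (a i) := by
  obtain ⟨v, hv0, hv⟩ := exists_common_eigenvector hA
  obtain ⟨R, hR⟩ := exists_specialLinearGroup_col_eq hv0
  have hRv : ((R⁻¹ : SL(2, ℂ)) : M₂) *ᵥ v = Pi.single 0 1 := by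
    rw [← hR, ← mulVec_single_one, mulVec_mulVec, ← Matrix.SpecialLinearGroup.coe_mul,
      inv_mul_cancel, Matrix.SpecialLinearGroup.coe_one, one_mulVec]
  have hlower : ∀ i, ((R⁻¹ * A i * R : SL(2, ℂ)) : M₂) 1 0 = 0 := by
    intro i
    obtain ⟨c, hc⟩ := hv i
    have hcol : ((R⁻¹ * A i * R : SL(2, ℂ)) : M₂) *ᵥ Pi.single 0 1 = c • Pi.single 0 1 := by
      rw [Matrix.SpecialLinearGroup.coe_mul, Matrix.SpecialLinearGroup.coe_mul, ← mulVec_mulVec,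
        mulVec_single_one, hR, ← mulVec_mulVec, hc, mulVec_smul, hRv]
    simpa using congrFun hcol 1
  choose l a hla using fun i => exists_eq_triSL_of_apply_one_zero (hlower i)
  exact ⟨R⁻¹, l, a, fun i => by rw [inv_inv, hla]⟩

section Orbits

variable {ι : Type*}

def conjOrbit (A : ι → SL(2, ℂ)) : Set (ι → M₂) :=
  {B | ∃ P : SL(2, ℂ), B = fun i => ((P * A i * P⁻¹ : SL(2, ℂ)) : M₂)}

theorem conjOrbit_conj_subset (A : ι → SL(2, ℂ)) (Q : SL(2, ℂ)) :
    conjOrbit (fun i => Q * A i * Q⁻¹) ⊆ conjOrbit A := by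
  rintro _ ⟨P, rfl⟩
  exact ⟨P * Q, by simp only [_root_.mul_inv_rev, mul_assoc]⟩

theorem conj_mem_closure_conjOrbit {A B : ι → SL(2, ℂ)}
    (hB : (fun i => (B i : M₂)) ∈ closure (conjOrbit A)) (P : SL(2, ℂ)) :
    (fun i => ((P * B i * P⁻¹ : SL(2, ℂ)) : M₂)) ∈ closure (conjOrbit A) := by
  have hmaps : Set.MapsTo (fun X : ι → M₂ => fun i => (P : M₂) * X i * (P⁻¹ : SL(2, ℂ)))
      (conjOrbit A) (conjOrbit A) := by
    rintro _ ⟨R, rfl⟩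
    refine ⟨P * R, funext fun i => ?_⟩
    simp only [Matrix.SpecialLinearGroup.coe_mul, _root_.mul_inv_rev, Matrix.mul_assoc]
  simpa only [Matrix.SpecialLinearGroup.coe_mul] using map_mem_closure (by fun_prop) hB hmaps

theorem diagSL_mem_closure_conjOrbit_triSL (l : ι → ℂˣ) (a : ι → ℂ) :
    (fun i => (diagSL (l i) : M₂)) ∈ closure (conjOrbit fun i => triSL (l i) (a i)) := by
  have hcont : Continuous fun t : ℂ => fun i => (triSL (l i) (t ^ 2 * a i) : M₂) := by
    simp only [coe_triSL]
    fun_prop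
  have hmaps : Set.MapsTo (fun t : ℂ => fun i => (triSL (l i) (t ^ 2 * a i) : M₂)) {0}ᶜ
      (conjOrbit fun i => triSL (l i) (a i)) := fun t ht =>
    ⟨diagSL (Units.mk0 t ht), by simp only [diagSL_conj_triSL]; rfl⟩
  have h0 : (0 : ℂ) ∈ closure {0}ᶜ := by
    simp [(dense_compl_singleton (0 : ℂ)).closure_eq]
  simpa [triSL_zero] using map_mem_closure hcont h0 hmaps

variable {A : ι → SL(2, ℂ)} {Q : SL(2, ℂ)} {l : ι → ℂˣ} {a : ι → ℂ}

theorem diagSL_mem_closure_conjOrbit (hQ : ∀ i, Q * A i * Q⁻¹ = triSL (l i) (a i)) :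
    (fun i => (diagSL (l i) : M₂)) ∈ closure (conjOrbit A) :=
  closure_mono (conjOrbit_conj_subset A Q)
    (by simpa only [← hQ] using diagSL_mem_closure_conjOrbit_triSL l a)

theorem diagSL_inv_mem_closure_conjOrbit (hQ : ∀ i, Q * A i * Q⁻¹ = triSL (l i) (a i)) :
    (fun i => (diagSL (l i)⁻¹ : M₂)) ∈ closure (conjOrbit A) := by
  simpa only [weylSL_conj_diagSL] using
    conj_mem_closure_conjOrbit (diagSL_mem_closure_conjOrbit hQ) weylSL

end Orbits

section Traces

variable {ι : Type*}

def traceMap (B : ι → M₂) : (ι → ℂ) × (ι × ι → ℂ) :=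
  (fun i => trace (B i), fun p => trace (B p.1 * B p.2))

def diagTraces (x y : ι → ℂ) : (ι → ℂ) × (ι × ι → ℂ) :=
  (fun i => x i + y i, fun p => x p.1 * x p.2 + y p.1 * y p.2)

noncomputable def unitTraces (ν : ι → ℂˣ) : (ι → ℂ) × (ι × ι → ℂ) :=
  diagTraces (fun i => (ν i : ℂ)) (fun i => (ν i : ℂ)⁻¹)

theorem continuous_traceMap : Continuous (traceMap (ι := ι)) := by
  unfold traceMap
  fun_prop

theorem trace_conj (P : SL(2, ℂ)) (X : M₂) :
    trace ((P : M₂) * X * ((P⁻¹ : SL(2, ℂ)) : M₂)) = trace X := by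
  rw [trace_mul_cycle, ← Matrix.SpecialLinearGroup.coe_mul, inv_mul_cancel,
    Matrix.SpecialLinearGroup.coe_one, Matrix.one_mul]

theorem traceMap_conj (A : ι → SL(2, ℂ)) (P : SL(2, ℂ)) :
    traceMap (fun i => ((P * A i * P⁻¹ : SL(2, ℂ)) : M₂)) = traceMap fun i => (A i : M₂) := by
  have hprod : ∀ X Y : SL(2, ℂ), P * X * P⁻¹ * (P * Y * P⁻¹) = P * (X * Y) * P⁻¹ := by
    intro X Y; group
  simp only [traceMap, ← Matrix.SpecialLinearGroup.coe_mul, hprod]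
  simp only [Matrix.SpecialLinearGroup.coe_mul, trace_conj]

theorem traceMap_triSL (l : ι → ℂˣ) (a : ι → ℂ) :
    traceMap (fun i => (triSL (l i) (a i) : M₂)) = unitTraces l := by
  simp [traceMap, unitTraces, diagTraces, coe_triSL, trace_fin_two, add_comm]

theorem traceMap_diagSL (ν : ι → ℂˣ) :
    traceMap (fun i => (diagSL (ν i) : M₂)) = unitTraces ν := by
  simpa only [Pi.zero_apply, triSL_zero] using traceMap_triSL ν 0

theorem eq_or_eq_inv_of_unitTraces_eq {ν l : ι → ℂˣ} (h : unitTraces ν = unitTraces l) :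
    ν = l ∨ ν = l⁻¹ := by
  simp only [unitTraces, diagTraces, Prod.mk.injEq, funext_iff, Prod.forall] at h
  refine eq_or_eq_inv_of_forall_mul (fun i => Units.add_inv_eq_add_inv_iff.1 (h.1 i))
    fun i j => Units.add_inv_eq_add_inv_iff.1 ?_
  simpa only [Units.val_mul, Units.val_inv_eq_inv_val, mul_inv] using h.2 i j

theorem exists_unitTraces_eq_of_tendsto [Fintype ι] {S : Set (ι → ℂ)} (hS : IsClosed S)
    {μ : ℕ → ι → ℂˣ} (hμS : ∀ k, (fun i => (μ k i : ℂ)) ∈ S) {t : (ι → ℂ) × (ι × ι → ℂ)}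
    (ht : Tendsto (fun k => unitTraces (μ k)) atTop (𝓝 t)) :
    ∃ ν : ι → ℂˣ, (fun i => (ν i : ℂ)) ∈ S ∧ unitTraces ν = t := by
  obtain ⟨C, hC⟩ := ht.norm.bddAbove_range
  have hbound : ∀ k i, ‖(μ k i : ℂ)‖ ≤ C + 1 ∧ ‖(μ k i : ℂ)⁻¹‖ ≤ C + 1 := by
    intro k i
    have hsum : ‖(μ k i : ℂ) + (μ k i : ℂ)⁻¹‖ ≤ C :=
      ((norm_le_pi_norm (unitTraces (μ k)).1 i).trans (norm_fst_le _)).trans (hC ⟨k, rfl⟩)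
    refine ⟨(norm_le_norm_add_inv_add_one _).trans (by linarith), ?_⟩
    have := norm_le_norm_add_inv_add_one (μ k i : ℂ)⁻¹
    rw [inv_inv, add_comm ((μ k i : ℂ)⁻¹)] at this
    linarith
  let K := Prod.fst ⁻¹' S ∩ (⋂ i, {p : (ι → ℂ) × (ι → ℂ) | p.1 i * p.2 i = 1}) ∩
    Metric.closedBall 0 (C + 1)
  have hK : IsCompact K :=
    (isCompact_closedBall _ _).inter_left ((hS.preimage continuous_fst).inter
      (isClosed_iInter fun i => isClosed_eq (by fun_prop) continuous_const))
  have hzK : ∀ k, ((fun i => (μ k i : ℂ)), fun i => (μ k i : ℂ)⁻¹) ∈ K := by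
    intro k
    refine ⟨⟨hμS k, Set.mem_iInter.2 fun i => mul_inv_cancel₀ (μ k i).ne_zero⟩, ?_⟩
    have hC0 : 0 ≤ C + 1 := by linarith [(norm_nonneg _).trans (hC ⟨k, rfl⟩)]
    rw [mem_closedBall_zero_iff, norm_prod_le_iff]
    exact ⟨(pi_norm_le_iff_of_nonneg hC0).2 fun i => (hbound k i).1,
      (pi_norm_le_iff_of_nonneg hC0).2 fun i => (hbound k i).2⟩
  obtain ⟨p, ⟨⟨hpS, hpK⟩, -⟩, rfl⟩ :=
    hK.exists_eq_of_tendsto_comp hzK (F := fun p => diagTraces p.1 p.2)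
      (by unfold diagTraces; fun_prop) ht
  have hp : ∀ i, p.1 i * p.2 i = 1 := by simpa using hpK
  refine ⟨fun i => Units.mkOfMulEqOne _ _ (hp i), hpS, ?_⟩
  simp only [unitTraces, Units.val_mkOfMulEqOne, fun i => inv_eq_of_mul_eq_one_right (hp i)]

end Traces

/-- Proposition 7.6 of the paper: let `W ⊆ SL₂(ℂ)ⁿ` be a set of tuples of diagonal
matrices cut out by polynomial equations on the eigenvalues. If a tuple `A` lies in the
closure (in the analytic topology induced from the space of `n`-tuples of `2 × 2`
complex matrices) of the saturation `SL₂(ℂ)·W` of `W` under simultaneous conjugation,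
then the closure of the conjugation orbit of `A` meets `W`. -/
theorem orbitClosure_meets_diagonal_core {n r : ℕ}
    (f : Fin r → MvPolynomial (Fin n) ℂ)
    (W : Set (Fin n → Matrix (Fin 2) (Fin 2) ℂ))
    (hW : W = {B | ∃ lam : Fin n → ℂˣ,
      (∀ j, MvPolynomial.eval (fun i => (lam i : ℂ)) (f j) = 0) ∧
      B = fun i => (diagSL (lam i) : Matrix (Fin 2) (Fin 2) ℂ)})
    (A : Fin n → Matrix.SpecialLinearGroup (Fin 2) ℂ)
    (hA : (fun i => (A i : Matrix (Fin 2) (Fin 2) ℂ)) ∈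
      closure {B : Fin n → Matrix (Fin 2) (Fin 2) ℂ |
        ∃ P : Matrix.SpecialLinearGroup (Fin 2) ℂ, ∃ C ∈ W,
          B = fun i => (P : Matrix (Fin 2) (Fin 2) ℂ) * C i *
            ((P⁻¹ : Matrix.SpecialLinearGroup (Fin 2) ℂ) : Matrix (Fin 2) (Fin 2) ℂ)}) :
    (closure {B : Fin n → Matrix (Fin 2) (Fin 2) ℂ |
        ∃ P : Matrix.SpecialLinearGroup (Fin 2) ℂ,
          B = fun i =>
            ((P * A i * P⁻¹ : Matrix.SpecialLinearGroup (Fin 2) ℂ) :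
              Matrix (Fin 2) (Fin 2) ℂ)} ∩ W).Nonempty := by
  obtain ⟨u, hu_mem, hu_lim⟩ := mem_closure_iff_seq_limit.1 hA
  choose P C hCW hu using hu_mem
  simp only [hW, Set.mem_ofPred_eq] at hCW
  choose μ hμf hC using hCW
  have hu' : ∀ k, u k = fun i => ((P k * diagSL (μ k i) * (P k)⁻¹ : SL(2, ℂ)) : M₂) := by
    intro k
    simp only [hu k, hC k, Matrix.SpecialLinearGroup.coe_mul]
  have hcomm : ∀ i j, Commute (A i : M₂) (A j) := by
    refine isClosed_setOf_forall_commute.mem_of_tendsto hu_lim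
      (Eventually.of_forall fun k i j => ?_)
    rw [hu' k]
    exact ((diagSL_commute _ _).conj (P k)).map Matrix.SpecialLinearGroup.coeMonoidHom
  obtain ⟨Q, l, a, hQ⟩ := exists_conj_eq_triSL hcomm
  have hlim : Tendsto (fun k => unitTraces (μ k)) atTop (𝓝 (unitTraces l)) := by
    have hu_tr : ∀ k, traceMap (u k) = unitTraces (μ k) := fun k => by
      rw [hu' k, traceMap_conj (fun i => diagSL (μ k i)), traceMap_diagSL]
    have hA_tr : traceMap (fun i => (A i : M₂)) = unitTraces l := by
      rw [← traceMap_conj A Q]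
      simp only [hQ, traceMap_triSL]
    simpa only [Function.comp_def, hu_tr, hA_tr] using
      (continuous_traceMap.tendsto _).comp hu_lim
  obtain ⟨ν, hνf, hν⟩ := exists_unitTraces_eq_of_tendsto
    (MvPolynomial.isClosed_setOf_forall_eval_eq_zero f) hμf hlim
  refine ⟨fun i => diagSL (ν i), ?_, hW ▸ ⟨ν, hνf, rfl⟩⟩
  rcases eq_or_eq_inv_of_unitTraces_eq hν with rfl | rfl
  · exact diagSL_mem_closure_conjOrbit hQ
  · exact diagSL_inv_mem_closure_conjOrbit hQ
end

section
/- Let A₁, …, Aₙ ∈ SL₂(ℂ) be upper triangular matrices, with Aᵢ having diagonal entries λᵢ and λᵢ⁻¹. If a tuple (D₁, …, Dₙ) of diagonal matrices lies in the closure, in the analytic topology on SL₂(ℂ)ⁿ, of the conjugation orbit of (A₁, …, Aₙ), then either Dᵢ = D_{λᵢ} for every i, or Dᵢ = D_{λᵢ⁻¹} for every i. In particular, the intersection of this orbit closure with the set of tuples of diagonal matrices consists of at most two points, which are exchanged by simultaneously swapping the two diagonal entries of every component. -/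
/-!
Both `tr Aᵢ` and `tr (Aᵢ Aⱼ)` are continuous conjugation invariants, so they take the same
values `λᵢ + λᵢ⁻¹` and `λᵢλⱼ + (λᵢλⱼ)⁻¹` on the orbit closure. A diagonal `Bᵢ = D_{μᵢ}` with
`tr Bᵢ = λᵢ + λᵢ⁻¹` has `μᵢ = λᵢ^{±1}`, and the traces of the products `BᵢBⱼ` rule out mixed
choices of sign: `λᵢλⱼ⁻¹ + λᵢ⁻¹λⱼ = λᵢλⱼ + λᵢ⁻¹λⱼ⁻¹` forces `λᵢ = λᵢ⁻¹` or `λⱼ = λⱼ⁻¹`.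
-/

open Matrix

namespace Matrix.SpecialLinearGroup

variable {n R : Type*} [Fintype n] [DecidableEq n] [CommRing R]

theorem trace_conj (P A : SpecialLinearGroup n R) :
    ((P * A * P⁻¹ : SpecialLinearGroup n R) : Matrix n n R).trace = (A : Matrix n n R).trace := by
  rw [coe_mul, coe_mul, trace_mul_comm, ← Matrix.mul_assoc, ← coe_mul, inv_mul_cancel, coe_one,
    Matrix.one_mul]

theorem trace_conj_mul_conj (P A B : SpecialLinearGroup n R) :
    ((P * A * P⁻¹ : SpecialLinearGroup n R) * (P * B * P⁻¹ : SpecialLinearGroup n R) :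
      Matrix n n R).trace = (A * B : Matrix n n R).trace := by
  rw [← coe_mul, conj_mul, trace_conj, coe_mul]

variable {ι : Type*} [TopologicalSpace R]

theorem apply_eq_of_mem_closure_conjOrbit {Y : Type*} [TopologicalSpace Y] [T2Space Y]
    (A : ι → SpecialLinearGroup n R) {f : (ι → Matrix n n R) → Y} (hf : Continuous f)
    (hconj : ∀ P : SpecialLinearGroup n R,
      f (fun i => ((P * A i * P⁻¹ : SpecialLinearGroup n R) : Matrix n n R)) =
        f (fun i => (A i : Matrix n n R)))
    {M : ι → Matrix n n R}
    (hM : M ∈ closure {M : ι → Matrix n n R | ∃ P : SpecialLinearGroup n R,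
      M = fun i => ((P * A i * P⁻¹ : SpecialLinearGroup n R) : Matrix n n R)}) :
    f M = f (fun i => (A i : Matrix n n R)) := by
  refine Set.EqOn.closure ?_ hf continuous_const hM
  rintro _ ⟨P, rfl⟩
  exact hconj P

end Matrix.SpecialLinearGroup

theorem diagSL_eq_triSL (l : ℂˣ) : diagSL l = triSL l 0 := rfl

theorem trace_triSL (l : ℂˣ) (a : ℂ) :
    (triSL l a : Matrix (Fin 2) (Fin 2) ℂ).trace = l + ↑l⁻¹ := by
  simp [triSL, Matrix.trace_fin_two_of]

theorem trace_triSL_mul_triSL (l m : ℂˣ) (a b : ℂ) :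
    ((triSL l a : Matrix (Fin 2) (Fin 2) ℂ) * triSL m b).trace = ↑(l * m) + ↑(l * m)⁻¹ := by
  simp only [triSL, Matrix.mul_fin_two, Matrix.trace_fin_two_of, Units.val_mul,
    Units.val_inv_eq_inv_val, _root_.mul_inv]
  ring

theorem exists_eq_diagSL_of_isDiag (D : SpecialLinearGroup (Fin 2) ℂ)
    (hD : (D : Matrix (Fin 2) (Fin 2) ℂ).IsDiag) : ∃ μ : ℂˣ, D = diagSL μ := by
  have h01 : (D : Matrix (Fin 2) (Fin 2) ℂ) 0 1 = 0 := hD (by decide)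
  have h10 : (D : Matrix (Fin 2) (Fin 2) ℂ) 1 0 = 0 := hD (by decide)
  have hdet : (D : Matrix (Fin 2) (Fin 2) ℂ) 0 0 * (D : Matrix (Fin 2) (Fin 2) ℂ) 1 1 = 1 := by
    have := D.det_coe
    rwa [det_fin_two, h01, zero_mul, sub_zero] at this
  refine ⟨Units.mkOfMulEqOne _ _ hdet, ?_⟩
  ext i j
  fin_cases i <;> fin_cases j <;> simp [diagSL, h01, h10, eq_inv_of_mul_eq_one_right hdet]

theorem Units.eq_or_eq_inv_of_add_inv_eq {K : Type*} [Field K] {x y : Kˣ}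
    (h : (x : K) + ↑x⁻¹ = y + ↑y⁻¹) : x = y ∨ x = y⁻¹ := by
  have hxy : ((x : K) - y) * (x - ↑y⁻¹) = 0 := by
    linear_combination (x : K) * h + y.mul_inv - x.mul_inv
  rcases mul_eq_zero.mp hxy with hy | hy
  · exact .inl (Units.ext (sub_eq_zero.mp hy))
  · exact .inr (Units.ext (sub_eq_zero.mp hy))

theorem Units.forall_eq_or_forall_eq_inv_of_add_inv_eq {ι K : Type*} [Field K] {lam μ : ι → Kˣ}
    (htrace : ∀ i, (μ i : K) + ↑(μ i)⁻¹ = lam i + ↑(lam i)⁻¹)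
    (htrace_mul : ∀ i j, ((μ i * μ j : Kˣ) : K) + ↑(μ i * μ j)⁻¹ =
      ↑(lam i * lam j) + ↑(lam i * lam j)⁻¹) :
    (∀ i, μ i = lam i) ∨ ∀ i, μ i = (lam i)⁻¹ := by
  by_cases hall : ∀ i, μ i = lam i
  · exact .inl hall
  push Not at hall
  obtain ⟨j, hj⟩ := hall
  have hμj : μ j = (lam j)⁻¹ := (eq_or_eq_inv_of_add_inv_eq (htrace j)).resolve_left hj
  refine .inr fun i => (eq_or_eq_inv_of_add_inv_eq (htrace i)).elim (fun hμi => ?_) id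
  rcases eq_or_eq_inv_of_add_inv_eq (htrace_mul i j) with h | h
  · rw [hμi, hμj] at h
    exact absurd (hμj.trans (mul_left_cancel h)) hj
  · rw [hμi, hμj, _root_.mul_inv] at h
    rw [hμi]
    exact mul_right_cancel h

/-- If `A₁, …, Aₙ ∈ SL₂(ℂ)` are upper triangular with diagonal entries `λᵢ, λᵢ⁻¹` and a
tuple `(B₁, …, Bₙ)` of diagonal matrices of `SL₂(ℂ)` lies in the closure (in the analytic
topology induced from the space of `n`-tuples of `2 × 2` complex matrices) of the
conjugation orbit of `(A₁, …, Aₙ)`, then either `Bᵢ = D_{λᵢ}` for every `i`, or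
`Bᵢ = D_{λᵢ⁻¹}` for every `i`. In particular the orbit closure contains at most two
diagonal tuples, exchanged by simultaneously swapping the diagonal entries. -/
theorem diagTuples_in_orbitClosure {n : ℕ} (lam : Fin n → ℂˣ) (α : Fin n → ℂ)
    (B : Fin n → Matrix.SpecialLinearGroup (Fin 2) ℂ)
    (hBdiag : ∀ i, ((B i : Matrix (Fin 2) (Fin 2) ℂ)).IsDiag)
    (hB : (fun i => (B i : Matrix (Fin 2) (Fin 2) ℂ)) ∈
      closure {M : Fin n → Matrix (Fin 2) (Fin 2) ℂ |
        ∃ P : Matrix.SpecialLinearGroup (Fin 2) ℂ,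
          M = fun i =>
            ((P * triSL (lam i) (α i) * P⁻¹ : Matrix.SpecialLinearGroup (Fin 2) ℂ) :
              Matrix (Fin 2) (Fin 2) ℂ)}) :
    (∀ i, B i = diagSL (lam i)) ∨ (∀ i, B i = diagSL ((lam i)⁻¹)) := by
  choose μ hμ using fun i => exists_eq_diagSL_of_isDiag (B i) (hBdiag i)
  obtain rfl : B = fun i => diagSL (μ i) := funext hμ
  have htrace (i : Fin n) : (μ i : ℂ) + ↑(μ i)⁻¹ = lam i + ↑(lam i)⁻¹ := by
    simpa only [diagSL_eq_triSL, trace_triSL] using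
      SpecialLinearGroup.apply_eq_of_mem_closure_conjOrbit _ (f := fun M => (M i).trace)
        (continuous_apply i).matrix_trace (fun P => SpecialLinearGroup.trace_conj P _) hB
  have htrace_mul (i j : Fin n) : ((μ i * μ j : ℂˣ) : ℂ) + ↑(μ i * μ j)⁻¹ =
      ↑(lam i * lam j) + ↑(lam i * lam j)⁻¹ := by
    simpa only [diagSL_eq_triSL, trace_triSL_mul_triSL] using
      SpecialLinearGroup.apply_eq_of_mem_closure_conjOrbit _ (f := fun M => (M i * M j).trace)
        ((continuous_apply i).matrix_mul (continuous_apply j)).matrix_trace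
        (fun P => SpecialLinearGroup.trace_conj_mul_conj P _ _) hB
  exact (Units.forall_eq_or_forall_eq_inv_of_add_inv_eq htrace htrace_mul).imp
    (fun h i => congrArg diagSL (h i)) (fun h i => congrArg diagSL (h i))
end

section
/- For i = 1, …, n let Wᵢ ⊆ SL₂(ℂ)ⁿ (i = 1, 2) be sets of tuples of diagonal matrices of the form Wᵢ = {(D_{λ₁}, …, D_{λₙ}) : λ ∈ (ℂ*)ⁿ, f(λ) = 0 for all f ∈ Fᵢ}, where F₁, F₂ are finite sets of polynomials in n variables over ℂ. Suppose each Wᵢ is invariant under the involution (D_{λ₁}, …, D_{λₙ}) ↦ (D_{λ₁⁻¹}, …, D_{λₙ⁻¹}) and that W₁ ∩ W₂ = ∅. Then the closures, in the analytic topology on SL₂(ℂ)ⁿ, of the sets {(PB₁P⁻¹, …, PBₙP⁻¹) : P ∈ SL₂(ℂ), (B₁, …, Bₙ) ∈ W₁} and {(PB₁P⁻¹, …, PBₙP⁻¹) : P ∈ SL₂(ℂ), (B₁, …, Bₙ) ∈ W₂} are disjoint. -/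
open Matrix

lemma norm_le_add_one_of_mul_eq_one {𝕜 : Type*} [NormedField 𝕜] {u v : 𝕜} {M : ℝ}
    (huv : u * v = 1) (hM : ‖u + v‖ ≤ M) : ‖u‖ ≤ M + 1 := by
  have hsq : ‖u‖ ^ 2 ≤ M * ‖u‖ + 1 :=
    calc ‖u‖ ^ 2 = ‖(u + v) * u - 1‖ := by rw [← norm_pow]; congr 1; linear_combination -huv
      _ ≤ ‖u + v‖ * ‖u‖ + 1 := by simpa [norm_mul] using norm_sub_le ((u + v) * u) 1
      _ ≤ M * ‖u‖ + 1 := by gcongr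
  nlinarith [norm_nonneg u, (norm_nonneg _).trans hM]

lemma Units.eq_or_eq_inv_of_add_inv_eq_s14 {K : Type*} [Field K] {a c : Kˣ}
    (h : (a : K) + ↑a⁻¹ = c + ↑c⁻¹) : c = a ∨ c = a⁻¹ := by
  have hc : ((c : K) - a) * ((c : K) - ↑a⁻¹) = 0 := by
    linear_combination (-(c : K)) * h + a.mul_inv - c.mul_inv
  rcases mul_eq_zero.mp hc with h | h
  · exact .inl (Units.ext (sub_eq_zero.mp h))
  · exact .inr (Units.ext (sub_eq_zero.mp h))

lemma isClosed_image_of_isCompact_inter_preimage {X Y : Type*} [TopologicalSpace X]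
    [TopologicalSpace Y] [T2Space Y] [CompactlyCoherentSpace Y] {g : X → Y} {Z : Set X}
    (hg : Continuous g) (hZ : ∀ K, IsCompact K → IsCompact (Z ∩ g ⁻¹' K)) :
    IsClosed (g '' Z) := by
  have hproper : IsProperMap (Z.domRestrict g) := by
    refine isProperMap_iff_isCompact_preimage.2 ⟨hg.comp continuous_subtype_val, fun K hK => ?_⟩
    rw [Subtype.isCompact_iff, Set.domRestrict_eq, Set.preimage_comp, Subtype.image_preimage_coe]
    exact hZ K hK
  simpa only [Set.range_domRestrict] using hproper.isClosedMap.isClosed_range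

lemma Matrix.SpecialLinearGroup.coe_inv_mul_coe {m R : Type*} [Fintype m] [DecidableEq m]
    [CommRing R] (P : SpecialLinearGroup m R) :
    ((P⁻¹ : SpecialLinearGroup m R) : Matrix m m R) * P = 1 := by
  rw [← SpecialLinearGroup.coe_mul, inv_mul_cancel, SpecialLinearGroup.coe_one]

section TraceCoordinates

variable {ι m R : Type*} [Fintype m] [CommRing R]

def traceCoords (B : ι → Matrix m m R) : (ι → R) × (ι → ι → R) :=
  (fun i => trace (B i), fun i j => trace (B i * B j))

lemma continuous_traceCoords [TopologicalSpace R] [IsTopologicalRing R] :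
    Continuous (traceCoords : (ι → Matrix m m R) → _) :=
  (continuous_pi fun i => (continuous_apply i).matrix_trace).prodMk
    (continuous_pi fun i => continuous_pi fun j =>
      ((continuous_apply i).matrix_mul (continuous_apply j)).matrix_trace)

variable [DecidableEq m]

def conjSaturation (W : Set (ι → Matrix m m R)) : Set (ι → Matrix m m R) :=
  {B | ∃ P : SpecialLinearGroup m R, ∃ C ∈ W,
    B = fun i => (P : Matrix m m R) * C i * ((P⁻¹ : SpecialLinearGroup m R) : Matrix m m R)}

lemma traceCoords_conj (P : SpecialLinearGroup m R) (C : ι → Matrix m m R) :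
    traceCoords (fun i => (P : Matrix m m R) * C i *
      ((P⁻¹ : SpecialLinearGroup m R) : Matrix m m R)) = traceCoords C := by
  set Q : Matrix m m R := ((P⁻¹ : SpecialLinearGroup m R) : Matrix m m R)
  have hQP : Q * P = 1 := SpecialLinearGroup.coe_inv_mul_coe P
  have conj_mul (X Y : Matrix m m R) : P * X * Q * (P * Y * Q) = P * (X * Y) * Q :=
    calc _ = P * X * (Q * P) * Y * Q := by simp only [Matrix.mul_assoc]
      _ = _ := by rw [hQP, Matrix.mul_one]; simp only [Matrix.mul_assoc]
  have trace_conj (X : Matrix m m R) : trace ((P : Matrix m m R) * X * Q) = trace X := by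
    rw [trace_mul_cycle, hQP, Matrix.one_mul]
  simp only [traceCoords, conj_mul, trace_conj]

end TraceCoordinates

section EigenvalueCoordinates

variable {ι R : Type*} [CommRing R]

def diagTraceCoords (w : ι → R × R) : (ι → R) × (ι → ι → R) :=
  (fun i => (w i).1 + (w i).2, fun i j => (w i).1 * (w j).1 + (w i).2 * (w j).2)

def eigenvalueVariety (F : Finset (MvPolynomial ι R)) : Set (ι → R × R) :=
  {w | (∀ i, (w i).1 * (w i).2 = 1) ∧ ∀ f ∈ F, MvPolynomial.eval (fun i => (w i).1) f = 0}

lemma eq_or_eq_inv_of_diagTraceCoords_eq {K : Type*} [Field K] {lam mu : ι → Kˣ}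
    (h : diagTraceCoords (fun i => ((lam i : K), (((lam i)⁻¹ : Kˣ) : K)))
      = diagTraceCoords (fun i => ((mu i : K), (((mu i)⁻¹ : Kˣ) : K)))) :
    mu = lam ∨ mu = lam⁻¹ := by
  have h₁ (i : ι) : (lam i : K) + ↑(lam i)⁻¹ = mu i + ↑(mu i)⁻¹ :=
    congrFun (congrArg Prod.fst h) i
  have h₂ (i j : ι) : ((lam i * lam j : Kˣ) : K) + ↑(lam i * lam j)⁻¹
      = ↑(mu i * mu j) + ↑(mu i * mu j)⁻¹ := by
    simpa only [diagTraceCoords, mul_inv, Units.val_mul]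
      using congrFun (congrFun (congrArg Prod.snd h) i) j
  by_cases hinv : mu = lam⁻¹
  · exact .inr hinv
  obtain ⟨i₀, hi₀⟩ := Function.ne_iff.mp hinv
  have hμi₀ : mu i₀ = lam i₀ := (Units.eq_or_eq_inv_of_add_inv_eq_s14 (h₁ i₀)).resolve_right hi₀
  refine .inl (funext fun j => ?_)
  rcases Units.eq_or_eq_inv_of_add_inv_eq_s14 (h₁ j) with hj | hj
  · exact hj
  -- `λ_{i₀} λ_j⁻¹` must be `λ_{i₀} λ_j` or its inverse; the latter would force `λ_{i₀}² = 1`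
  rcases Units.eq_or_eq_inv_of_add_inv_eq_s14 (h₂ i₀ j) with h | h
  · rw [hμi₀] at h
    exact mul_left_cancel h
  · rw [hμi₀, hj, mul_inv] at h
    exact absurd (hμi₀.trans (mul_right_cancel h)) hi₀

variable [TopologicalSpace R] [IsTopologicalRing R]

lemma continuous_diagTraceCoords : Continuous (diagTraceCoords : (ι → R × R) → _) := by
  unfold diagTraceCoords
  fun_prop

lemma isClosed_eigenvalueVariety [T2Space R] (F : Finset (MvPolynomial ι R)) :
    IsClosed (eigenvalueVariety F) := by
  simp only [eigenvalueVariety, Set.ofPred_and, Set.ofPred_forall]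
  exact (isClosed_iInter fun i => isClosed_eq (by fun_prop) continuous_const).inter
    (isClosed_iInter fun f => isClosed_iInter fun _ =>
      isClosed_eq ((MvPolynomial.continuous_eval f).comp (by fun_prop)) continuous_const)

end EigenvalueCoordinates

lemma isCompact_eigenvalueVariety_inter_preimage {ι 𝕜 : Type*} [Fintype ι] [NormedField 𝕜]
    [ProperSpace 𝕜] (F : Finset (MvPolynomial ι 𝕜)) {K : Set ((ι → 𝕜) × (ι → ι → 𝕜))}
    (hK : IsCompact K) : IsCompact (eigenvalueVariety F ∩ diagTraceCoords ⁻¹' K) := by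
  refine Metric.isCompact_of_isClosed_isBounded
    ((isClosed_eigenvalueVariety F).inter (hK.isClosed.preimage continuous_diagTraceCoords)) ?_
  obtain ⟨R, hR⟩ := hK.isBounded.exists_norm_le
  refine isBounded_iff_forall_norm_le.2 ⟨R + 1, ?_⟩
  rintro w ⟨⟨hw, -⟩, hwK⟩
  have hsum (i : ι) : ‖(w i).1 + (w i).2‖ ≤ R :=
    (norm_le_pi_norm (diagTraceCoords w).1 i).trans ((norm_fst_le _).trans (hR _ hwK))
  refine (pi_norm_le_iff_of_nonneg (by linarith [hR _ hwK, norm_nonneg (diagTraceCoords w)])).2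
    fun i => norm_prod_le_iff.2 ⟨norm_le_add_one_of_mul_eq_one (hw i) (hsum i), ?_⟩
  exact norm_le_add_one_of_mul_eq_one (by rw [mul_comm, hw i]) (by rw [add_comm]; exact hsum i)

section Diagonal

variable {n : ℕ}

lemma traceCoords_diagSL (lam : Fin n → ℂˣ) :
    traceCoords (fun i => (diagSL (lam i) : Matrix (Fin 2) (Fin 2) ℂ))
      = diagTraceCoords (fun i => ((lam i : ℂ), (((lam i)⁻¹ : ℂˣ) : ℂ))) := by
  simp [traceCoords, diagTraceCoords, diagSL, trace_fin_two]

def diagonalLocus (F : Finset (MvPolynomial (Fin n) ℂ)) :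
    Set (Fin n → Matrix (Fin 2) (Fin 2) ℂ) :=
  {B | ∃ lam : Fin n → ℂˣ, (∀ f ∈ F, MvPolynomial.eval (fun i => (lam i : ℂ)) f = 0) ∧
    B = fun i => (diagSL (lam i) : Matrix (Fin 2) (Fin 2) ℂ)}

lemma image_traceCoords_diagonalLocus (F : Finset (MvPolynomial (Fin n) ℂ)) :
    traceCoords '' diagonalLocus F = diagTraceCoords '' eigenvalueVariety F := by
  ext t
  constructor
  · rintro ⟨_, ⟨lam, hlam, rfl⟩, rfl⟩
    exact ⟨fun i => ((lam i : ℂ), (((lam i)⁻¹ : ℂˣ) : ℂ)), ⟨fun i => (lam i).mul_inv, hlam⟩,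
      (traceCoords_diagSL lam).symm⟩
  · rintro ⟨w, ⟨hw, hF⟩, rfl⟩
    -- `w i` is definitionally the pair `(λᵢ, λᵢ⁻¹)` of the unit `λᵢ` built from `hw i`
    exact ⟨_, ⟨fun i => Units.mkOfMulEqOne _ _ (hw i), hF, rfl⟩, traceCoords_diagSL _⟩

lemma closure_conjSaturation_diagonalLocus_subset (F : Finset (MvPolynomial (Fin n) ℂ)) :
    closure (conjSaturation (diagonalLocus F))
      ⊆ traceCoords ⁻¹' (traceCoords '' diagonalLocus F) := by
  have hclosed : IsClosed (traceCoords '' diagonalLocus F) := by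
    rw [image_traceCoords_diagonalLocus]
    exact isClosed_image_of_isCompact_inter_preimage continuous_diagTraceCoords
      fun K hK => isCompact_eigenvalueVariety_inter_preimage F hK
  refine closure_minimal ?_ (hclosed.preimage continuous_traceCoords)
  rintro _ ⟨P, C, hC, rfl⟩
  exact ⟨C, hC, (traceCoords_conj P C).symm⟩

end Diagonal

theorem saturations_of_disjoint_diagonal_sets_disjoint_general {n : ℕ}
    (F₁ F₂ : Finset (MvPolynomial (Fin n) ℂ))
    (W₁ W₂ : Set (Fin n → Matrix (Fin 2) (Fin 2) ℂ))
    (hW₁ : W₁ = {B | ∃ lam : Fin n → ℂˣ,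
      (∀ f ∈ F₁, MvPolynomial.eval (fun i => (lam i : ℂ)) f = 0) ∧
      B = fun i => (diagSL (lam i) : Matrix (Fin 2) (Fin 2) ℂ)})
    (hW₂ : W₂ = {B | ∃ lam : Fin n → ℂˣ,
      (∀ f ∈ F₂, MvPolynomial.eval (fun i => (lam i : ℂ)) f = 0) ∧
      B = fun i => (diagSL (lam i) : Matrix (Fin 2) (Fin 2) ℂ)})
    (hinv₂ : ∀ lam : Fin n → ℂˣ,
      (fun i => (diagSL (lam i) : Matrix (Fin 2) (Fin 2) ℂ)) ∈ W₂ →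
      (fun i => (diagSL ((lam i)⁻¹) : Matrix (Fin 2) (Fin 2) ℂ)) ∈ W₂)
    (hdisj : Disjoint W₁ W₂) :
    Disjoint
      (closure {B : Fin n → Matrix (Fin 2) (Fin 2) ℂ |
        ∃ P : Matrix.SpecialLinearGroup (Fin 2) ℂ, ∃ C ∈ W₁,
          B = fun i => (P : Matrix (Fin 2) (Fin 2) ℂ) * C i *
            ((P⁻¹ : Matrix.SpecialLinearGroup (Fin 2) ℂ) : Matrix (Fin 2) (Fin 2) ℂ)})
      (closure {B : Fin n → Matrix (Fin 2) (Fin 2) ℂ |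
        ∃ P : Matrix.SpecialLinearGroup (Fin 2) ℂ, ∃ C ∈ W₂,
          B = fun i => (P : Matrix (Fin 2) (Fin 2) ℂ) * C i *
            ((P⁻¹ : Matrix.SpecialLinearGroup (Fin 2) ℂ) : Matrix (Fin 2) (Fin 2) ℂ)}) := by
  subst hW₁ hW₂
  refine Set.disjoint_left.2 fun B hB₁ hB₂ => ?_
  obtain ⟨_, ⟨lam, hlam, rfl⟩, hB_lam⟩ := closure_conjSaturation_diagonalLocus_subset F₁ hB₁
  obtain ⟨_, ⟨mu, hmu, rfl⟩, hB_mu⟩ := closure_conjSaturation_diagonalLocus_subset F₂ hB₂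
  rw [traceCoords_diagSL] at hB_lam hB_mu
  rcases eq_or_eq_inv_of_diagTraceCoords_eq (hB_lam.trans hB_mu.symm) with rfl | rfl
  · exact Set.disjoint_left.1 hdisj ⟨mu, hlam, rfl⟩ ⟨mu, hmu, rfl⟩
  · exact Set.disjoint_left.1 hdisj ⟨lam, hlam, rfl⟩ (by simpa using hinv₂ _ ⟨lam⁻¹, hmu, rfl⟩)

/-- The separation property of the diagonal core: if `W₁, W₂ ⊆ SL₂(ℂ)ⁿ` are disjoint sets
of tuples of diagonal matrices cut out by finite sets of polynomial equations on the
eigenvalues, each invariant under the involution `(D_{λ₁}, …, D_{λₙ}) ↦ (D_{λ₁⁻¹}, …,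
D_{λₙ⁻¹})`, then the closures (in the analytic topology induced from the space of
`n`-tuples of `2 × 2` complex matrices) of their saturations under simultaneous
conjugation by `SL₂(ℂ)` are disjoint. -/
theorem saturations_of_disjoint_diagonal_sets_disjoint {n : ℕ}
    (F₁ F₂ : Finset (MvPolynomial (Fin n) ℂ))
    (W₁ W₂ : Set (Fin n → Matrix (Fin 2) (Fin 2) ℂ))
    (hW₁ : W₁ = {B | ∃ lam : Fin n → ℂˣ,
      (∀ f ∈ F₁, MvPolynomial.eval (fun i => (lam i : ℂ)) f = 0) ∧
      B = fun i => (diagSL (lam i) : Matrix (Fin 2) (Fin 2) ℂ)})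
    (hW₂ : W₂ = {B | ∃ lam : Fin n → ℂˣ,
      (∀ f ∈ F₂, MvPolynomial.eval (fun i => (lam i : ℂ)) f = 0) ∧
      B = fun i => (diagSL (lam i) : Matrix (Fin 2) (Fin 2) ℂ)})
    (hinv₁ : ∀ lam : Fin n → ℂˣ,
      (fun i => (diagSL (lam i) : Matrix (Fin 2) (Fin 2) ℂ)) ∈ W₁ →
      (fun i => (diagSL ((lam i)⁻¹) : Matrix (Fin 2) (Fin 2) ℂ)) ∈ W₁)
    (hinv₂ : ∀ lam : Fin n → ℂˣ,
      (fun i => (diagSL (lam i) : Matrix (Fin 2) (Fin 2) ℂ)) ∈ W₂ →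
      (fun i => (diagSL ((lam i)⁻¹) : Matrix (Fin 2) (Fin 2) ℂ)) ∈ W₂)
    (hdisj : Disjoint W₁ W₂) :
    Disjoint
      (closure {B : Fin n → Matrix (Fin 2) (Fin 2) ℂ |
        ∃ P : Matrix.SpecialLinearGroup (Fin 2) ℂ, ∃ C ∈ W₁,
          B = fun i => (P : Matrix (Fin 2) (Fin 2) ℂ) * C i *
            ((P⁻¹ : Matrix.SpecialLinearGroup (Fin 2) ℂ) : Matrix (Fin 2) (Fin 2) ℂ)})
      (closure {B : Fin n → Matrix (Fin 2) (Fin 2) ℂ |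
        ∃ P : Matrix.SpecialLinearGroup (Fin 2) ℂ, ∃ C ∈ W₂,
          B = fun i => (P : Matrix (Fin 2) (Fin 2) ℂ) * C i *
            ((P⁻¹ : Matrix.SpecialLinearGroup (Fin 2) ℂ) : Matrix (Fin 2) (Fin 2) ℂ)}) :=
  saturations_of_disjoint_diagonal_sets_disjoint_general F₁ F₂ W₁ W₂ hW₁ hW₂ hinv₂ hdisj
end

section
/- Let g ≥ 1 and for i = 1, …, g let λᵢ, μᵢ ∈ ℂ* and αᵢ, βᵢ ∈ ℂ, and set Aᵢ = [[λᵢ, αᵢ], [0, λᵢ⁻¹]] and Bᵢ = [[μᵢ, βᵢ], [0, μᵢ⁻¹]], which are elements of SL₂(ℂ). Then the product of commutators satisfies ∏_{i=1}^{g} AᵢBᵢAᵢ⁻¹Bᵢ⁻¹ = Id if and only if ∑_{i=1}^{g} λᵢμᵢ ((λᵢ − λᵢ⁻¹)βᵢ − (μᵢ − μᵢ⁻¹)αᵢ) = 0. -/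
lemma triSL_mul (l m : ℂˣ) (a b : ℂ) :
    triSL l a * triSL m b = triSL (l * m) ((l : ℂ) * b + a * ((m⁻¹ : ℂˣ) : ℂ)) := by
  apply Subtype.ext
  rw [Matrix.SpecialLinearGroup.coe_mul]
  simp [triSL, mul_comm]

lemma triSL_one_zero : triSL 1 0 = 1 := by
  ext i j
  fin_cases i <;> fin_cases j <;> simp [triSL]

lemma triSL_inv (l : ℂˣ) (a : ℂ) : (triSL l a)⁻¹ = triSL l⁻¹ (-a) := by
  refine (eq_inv_of_mul_eq_one_right ?_).symm
  rw [triSL_mul, mul_inv_cancel, inv_inv, mul_neg, mul_comm, neg_add_cancel, triSL_one_zero]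

lemma triSL_commutator (l m : ℂˣ) (a b : ℂ) :
    triSL l a * triSL m b * (triSL l a)⁻¹ * (triSL m b)⁻¹ =
      triSL 1 ((l : ℂ) * m * ((l - (l : ℂ)⁻¹) * b - (m - (m : ℂ)⁻¹) * a)) := by
  rw [triSL_inv, triSL_inv, triSL_mul, triSL_mul, triSL_mul, mul_right_comm l m l⁻¹,
    mul_inv_cancel, one_mul, mul_inv_cancel]
  congr 1
  have hl : (l : ℂ) ≠ 0 := l.ne_zero
  have hm : (m : ℂ) ≠ 0 := m.ne_zero
  push_cast
  field_simp
  ring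

noncomputable def unipotentSL : Multiplicative ℂ →* Matrix.SpecialLinearGroup (Fin 2) ℂ where
  toFun s := triSL 1 s.toAdd
  map_one' := triSL_one_zero
  map_mul' s t := by simp [triSL_mul, add_comm]

lemma unipotentSL_apply (s : Multiplicative ℂ) : unipotentSL s = triSL 1 s.toAdd := rfl

lemma unipotentSL_injective : Function.Injective unipotentSL := by
  intro s t h
  have h01 := congr_arg (fun M : Matrix.SpecialLinearGroup (Fin 2) ℂ => M 0 1) h
  simpa [unipotentSL_apply, triSL] using h01

lemma prod_ofFn_triSL_one {n : ℕ} (c : Fin n → ℂ) :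
    (List.ofFn fun i => triSL 1 (c i)).prod = triSL 1 (∑ i, c i) := by
  have := map_list_prod unipotentSL (List.ofFn fun i => Multiplicative.ofAdd (c i))
  rw [List.prod_ofFn, List.map_ofFn, ← ofAdd_sum] at this
  simpa [Function.comp_def, unipotentSL_apply] using this.symm

lemma triSL_one_eq_one_iff (s : ℂ) : triSL 1 s = 1 ↔ s = 0 :=
  unipotentSL_injective.eq_iff' (map_one unipotentSL)

theorem upperTriangular_surface_relation_general {g : ℕ}
    (lam mu : Fin g → ℂˣ) (α β : Fin g → ℂ) :
    (List.ofFn fun i =>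
        triSL (lam i) (α i) * triSL (mu i) (β i) *
          (triSL (lam i) (α i))⁻¹ * (triSL (mu i) (β i))⁻¹).prod = 1 ↔
      ∑ i : Fin g, (lam i : ℂ) * (mu i : ℂ) *
        (((lam i : ℂ) - ((lam i : ℂ))⁻¹) * β i - ((mu i : ℂ) - ((mu i : ℂ))⁻¹) * α i)
        = 0 := by
  simp only [triSL_commutator, prod_ofFn_triSL_one]
  exact triSL_one_eq_one_iff _

/-- The characterization of upper triangular points of the `SL₂(ℂ)`-representation variety
of a genus `g` surface group: with `Aᵢ = [[λᵢ, αᵢ], [0, λᵢ⁻¹]]` and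
`Bᵢ = [[μᵢ, βᵢ], [0, μᵢ⁻¹]]`, the product of commutators `∏ᵢ AᵢBᵢAᵢ⁻¹Bᵢ⁻¹` equals the
identity iff `∑ᵢ λᵢμᵢ ((λᵢ − λᵢ⁻¹)βᵢ − (μᵢ − μᵢ⁻¹)αᵢ) = 0`. -/
theorem upperTriangular_surface_relation {g : ℕ} (hg : 1 ≤ g)
    (lam mu : Fin g → ℂˣ) (α β : Fin g → ℂ) :
    (List.ofFn fun i =>
        triSL (lam i) (α i) * triSL (mu i) (β i) *
          (triSL (lam i) (α i))⁻¹ * (triSL (mu i) (β i))⁻¹).prod = 1 ↔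
      ∑ i : Fin g, (lam i : ℂ) * (mu i : ℂ) *
        (((lam i : ℂ) - ((lam i : ℂ))⁻¹) * β i - ((mu i : ℂ) - ((mu i : ℂ))⁻¹) * α i)
        = 0 :=
  upperTriangular_surface_relation_general lam mu α β
end

section
/- Let g ≥ 0 and r ≥ 0, let A₁, B₁, …, A_g, B_g ∈ SL₂(ℂ), and let C₁, …, C_r ∈ SL₂(ℂ) be matrices each of which is conjugate in SL₂(ℂ) to J₊ = [[1,1],[0,1]]. Suppose that ∏_{i=1}^{g} AᵢBᵢAᵢ⁻¹Bᵢ⁻¹ · ∏_{j=1}^{r} Cⱼ = −Id. Then there is no nonzero vector v ∈ ℂ² that is simultaneously an eigenvector of every Aᵢ, every Bᵢ and every Cⱼ; that is, the tuple (A₁, B₁, …, A_g, B_g, C₁, …, C_r) is an irreducible representation. -/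
/-- The matrix `J₊ = [[1,1],[0,1]] ∈ SL₂(ℂ)`. -/
def Jplus : Matrix.SpecialLinearGroup (Fin 2) ℂ :=
  ⟨!![1, 1; 0, 1], by simp [Matrix.det_fin_two_of]⟩

/-!
If `v` is a common eigenvector, then each commutator `AᵢBᵢAᵢ⁻¹Bᵢ⁻¹` fixes `v`, since the
eigenvalues of `Aᵢ` and `Bᵢ` cancel, and each `Cⱼ` fixes `v`, since `J₊` (hence each of its
conjugates) has `1` as its only eigenvalue. So the whole product fixes `v`; being `−Id`, it also
sends `v` to `−v`, forcing `v = 0`.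
-/

section Eigenvector

variable {G K M : Type*} [Group G]

theorem conj_smul_eq_smul_iff [MulAction G M] [SMul K M] [SMulCommClass G K M]
    {p g : G} {v : M} {a : K} :
    (p * g * p⁻¹) • v = a • v ↔ g • p⁻¹ • v = a • p⁻¹ • v := by
  rw [← smul_left_cancel_iff p⁻¹, smul_comm p⁻¹ a v, ← mul_smul, ← mul_smul, mul_assoc,
    inv_mul_cancel_left]

variable [Field K] [AddCommGroup M] [Module K M] [DistribMulAction G M]

theorem eigenvalue_ne_zero_of_smul_eq_smul {g : G} {v : M} {a : K} (hv : v ≠ 0)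
    (h : g • v = a • v) : a ≠ 0 := by
  rintro rfl
  exact hv ((smul_eq_zero_iff_eq g).mp (by rw [h, zero_smul]))

variable [SMulCommClass G K M]

theorem inv_smul_eq_inv_smul_of_smul_eq_smul {g : G} {v : M} {a : K} (hv : v ≠ 0)
    (h : g • v = a • v) : g⁻¹ • v = a⁻¹ • v := by
  rw [eq_inv_smul_iff₀ (eigenvalue_ne_zero_of_smul_eq_smul hv h), ← smul_comm, ← h,
    inv_smul_smul]

theorem commutator_smul_eq_self_of_smul_eq_smul {g h : G} {v : M} {a b : K} (hv : v ≠ 0)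
    (hg : g • v = a • v) (hh : h • v = b • v) : (g * h * g⁻¹ * h⁻¹) • v = v := by
  have ha := eigenvalue_ne_zero_of_smul_eq_smul hv hg
  have hb := eigenvalue_ne_zero_of_smul_eq_smul hv hh
  simp only [mul_smul, inv_smul_eq_inv_smul_of_smul_eq_smul hv hg,
    inv_smul_eq_inv_smul_of_smul_eq_smul hv hh, hg, hh, smul_comm (_ : G) (_ : K)]
  rw [smul_smul, smul_smul, smul_smul, show b⁻¹ * a⁻¹ * b * a = 1 by field_simp, one_smul]

end Eigenvector

theorem Jplus_eigenvalue_eq_one {w : Fin 2 → ℂ} {c : ℂ} (hw : w ≠ 0) (h : Jplus • w = c • w) :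
    c = 1 := by
  rw [Matrix.SpecialLinearGroup.smul_def] at h
  have h0 : w 0 + w 1 = c * w 0 := by
    simpa [Jplus, Matrix.vecHead, Matrix.vecTail] using congrFun h 0
  have h1 : w 1 = c * w 1 := by
    simpa [Jplus, Matrix.vecHead, Matrix.vecTail] using congrFun h 1
  by_contra hc
  have hc' : c - 1 ≠ 0 := sub_ne_zero.mpr hc
  have hw1 : w 1 = 0 := by
    simpa [hc'] using (show (c - 1) * w 1 = 0 by linear_combination -h1)
  have hw0 : w 0 = 0 := by
    simpa [hc'] using (show (c - 1) * w 0 = 0 by linear_combination -h0 + hw1)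
  exact hw (funext fun i => by fin_cases i <;> assumption)

theorem conj_Jplus_smul_eq_self_of_smul_eq_smul {P : Matrix.SpecialLinearGroup (Fin 2) ℂ}
    {v : Fin 2 → ℂ} {c : ℂ} (hv : v ≠ 0) (h : (P * Jplus * P⁻¹) • v = c • v) :
    (P * Jplus * P⁻¹) • v = v := by
  rwa [Jplus_eigenvalue_eq_one ((smul_ne_zero_iff_ne _).mpr hv) (conj_smul_eq_smul_iff.mp h),
    one_smul] at h

/-- Twisted representations are irreducible: if `A₁, B₁, …, A_g, B_g ∈ SL₂(ℂ)` and
`C₁, …, C_r ∈ SL₂(ℂ)` are each conjugate to `J₊`, and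
`∏ᵢ AᵢBᵢAᵢ⁻¹Bᵢ⁻¹ · ∏ⱼ Cⱼ = −Id`, then there is no nonzero vector `v ∈ ℂ²` that is a
common eigenvector of all the `Aᵢ`, `Bᵢ` and `Cⱼ`. -/
theorem twisted_representation_irreducible {g r : ℕ}
    (A B : Fin g → Matrix.SpecialLinearGroup (Fin 2) ℂ)
    (C : Fin r → Matrix.SpecialLinearGroup (Fin 2) ℂ)
    (hC : ∀ j, ∃ P : Matrix.SpecialLinearGroup (Fin 2) ℂ, C j = P * Jplus * P⁻¹)
    (hrel : (((List.ofFn fun i => A i * B i * (A i)⁻¹ * (B i)⁻¹).prod *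
        (List.ofFn C).prod : Matrix.SpecialLinearGroup (Fin 2) ℂ) :
        Matrix (Fin 2) (Fin 2) ℂ) = -1) :
    ¬ ∃ v : Fin 2 → ℂ, v ≠ 0 ∧
        (∀ i, ∃ a : ℂ, (A i : Matrix (Fin 2) (Fin 2) ℂ).mulVec v = a • v) ∧
        (∀ i, ∃ b : ℂ, (B i : Matrix (Fin 2) (Fin 2) ℂ).mulVec v = b • v) ∧
        (∀ j, ∃ c : ℂ, (C j : Matrix (Fin 2) (Fin 2) ℂ).mulVec v = c • v) := by
  rintro ⟨v, hv, hA, hB, hCv⟩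
  simp only [← Matrix.smul_eq_mulVec, ← Matrix.SpecialLinearGroup.smul_def] at hA hB hCv
  have hcomm : ∀ i, A i * B i * (A i)⁻¹ * (B i)⁻¹ ∈ MulAction.stabilizer _ v := fun i => by
    obtain ⟨a, ha⟩ := hA i
    obtain ⟨b, hb⟩ := hB i
    exact commutator_smul_eq_self_of_smul_eq_smul hv ha hb
  have hCfix : ∀ j, C j ∈ MulAction.stabilizer _ v := fun j => by
    obtain ⟨P, hP⟩ := hC j
    obtain ⟨c, hc⟩ := hCv j
    rw [hP] at hc ⊢
    exact conj_Jplus_smul_eq_self_of_smul_eq_smul hv hc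
  have hfix := mul_mem
    (Subgroup.list_prod_mem _ (List.forall_mem_ofFn_iff.mpr hcomm))
    (Subgroup.list_prod_mem _ (List.forall_mem_ofFn_iff.mpr hCfix))
  rw [MulAction.mem_stabilizer_iff, Matrix.SpecialLinearGroup.smul_def, hrel] at hfix
  simp only [neg_smul, one_smul, neg_eq_self] at hfix
  exact hv hfix
end
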